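/- Suppose that in the three-column diagram with top row ψ⁺φ⁺E → ψ*φ⁺E → ψ*φ*E and the corresponding tangent row T_Z → ψ*T_Y → ψ*φ*T_X = (φ∘ψ)*T_X both small squares are Cartesian (pullback squares); then the outer square is Cartesian, i.e. ψ⁺φ⁺E is the pullback of T_Z and (φ∘ψ)*E over (φ∘ψ)*T_X; hence when the middle square ψ*φ⁺E = ψ*T_Y ×_{ψ*φ*T_X} ψ*φ*E is Cartesian, the canonical map c⁺_{φ,ψ} : ψ⁺φ⁺E → (φ∘ψ)⁺E is an isomorphism. -/
import Mathlib


/-- A commuting square of `R`-modules (top `f : A' → B'`, left `p : A' → A`,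
right `b : B' → B`, bottom `f' : A → B`) is Cartesian (a pullback). -/
def IsCartSq {R A' B' A B : Type*} [CommRing R]
    [AddCommGroup A'] [Module R A'] [AddCommGroup B'] [Module R B']
    [AddCommGroup A] [Module R A] [AddCommGroup B] [Module R B]
    (f : A' →ₗ[R] B') (p : A' →ₗ[R] A) (b : B' →ₗ[R] B) (f' : A →ₗ[R] B) : Prop :=
  (∀ x, b (f x) = f' (p x)) ∧
  ∀ (y : B') (z : A), b y = f' z → ∃! x : A', f x = y ∧ p x = z

/-- Pasting law for pullback squares of modules, and the consequence used in the paper: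
if in a two-square diagram both small squares are Cartesian, then the outer rectangle is
Cartesian; hence any mediating map `m` into a pullback realization `D` of the outer
cospan (e.g. the canonical map `c⁺_{φ,ψ} : ψ⁺φ⁺E → (φ∘ψ)⁺E` when the middle square
`ψ*φ⁺E = ψ*T_Y ×_{ψ*φ*T_X} ψ*φ*E` is Cartesian) is an isomorphism. -/
theorem stmt15 (R A' B' C' A B C D : Type*) [CommRing R]
    [AddCommGroup A'] [Module R A'] [AddCommGroup B'] [Module R B']
    [AddCommGroup C'] [Module R C'] [AddCommGroup A] [Module R A]
    [AddCommGroup B] [Module R B] [AddCommGroup C] [Module R C]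
    [AddCommGroup D] [Module R D]
    (f : A' →ₗ[R] B') (g : B' →ₗ[R] C')
    (f' : A →ₗ[R] B) (g' : B →ₗ[R] C)
    (a : A' →ₗ[R] A) (b : B' →ₗ[R] B) (c : C' →ₗ[R] C)
    (hL : IsCartSq f a b f') (hR : IsCartSq g b c g') :
    IsCartSq (g ∘ₗ f) a c (g' ∘ₗ f') ∧
    (∀ (u : D →ₗ[R] C') (v : D →ₗ[R] A),
      IsCartSq u v c (g' ∘ₗ f') →
      ∀ m : A' →ₗ[R] D, u ∘ₗ m = g ∘ₗ f → v ∘ₗ m = a →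
        Function.Bijective m) := by

  obtain ⟨hLc, hLu⟩ := hL
  obtain ⟨hRc, hRu⟩ := hR
  have outer : IsCartSq (g ∘ₗ f) a c (g' ∘ₗ f') := by
    constructor
    · intro x
      simp only [LinearMap.comp_apply, hRc, hLc]
    · intro y z hyz
      simp only [LinearMap.comp_apply] at hyz
      obtain ⟨xB, ⟨hxB1, hxB2⟩, hxBu⟩ := hRu y (f' z) hyz
      obtain ⟨x, ⟨hx1, hx2⟩, hxu⟩ := hLu xB z hxB2
      refine ⟨x, ⟨by simp [LinearMap.comp_apply, hx1, hxB1], hx2⟩, ?_⟩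
      rintro x' ⟨hx'1, hx'2⟩
      simp only [LinearMap.comp_apply] at hx'1
      have hfx' : f x' = xB := by
        apply hxBu
        exact ⟨hx'1, by rw [hLc, hx'2]⟩
      exact hxu x' ⟨hfx', hx'2⟩
  refine ⟨outer, ?_⟩
  intro u v hD m hum hvm
  obtain ⟨hOc, hOu⟩ := outer
  obtain ⟨hDc, hDu⟩ := hD
  have hum' : ∀ x, u (m x) = g (f x) := fun x => congrArg (· x) (congrArg DFunLike.coe hum)
  have hvm' : ∀ x, v (m x) = a x := fun x => congrArg (· x) (congrArg DFunLike.coe hvm)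
  constructor
  · intro x1 x2 h
    have h1 : (g ∘ₗ f) x1 = (g ∘ₗ f) x2 := by
      simp only [LinearMap.comp_apply, ← hum', h]
    have h2 : a x1 = a x2 := by rw [← hvm', ← hvm', h]
    obtain ⟨x, hx, hxu⟩ := hOu ((g ∘ₗ f) x1) (a x1) (hOc x1)
    have e1 := hxu x1 ⟨rfl, rfl⟩
    have e2 := hxu x2 ⟨h1.symm, h2.symm⟩
    rw [e1, e2]
  · intro d
    obtain ⟨x, ⟨hx1, hx2⟩, _⟩ := hOu (u d) (v d) (hDc d)
    obtain ⟨d', _, hd'u⟩ := hDu (u d) (v d) (hDc d)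
    refine ⟨x, ?_⟩
    have h1 := hd'u (m x) ⟨by rw [hum']; simpa using hx1, by rw [hvm', hx2]⟩
    have h2 := hd'u d ⟨rfl, rfl⟩
    rw [h1, h2]
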